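/- Let 𝒞 and 𝒟 be preadditive categories and let F : 𝒞 ⥤ 𝒟 be a functor with a left adjoint L : 𝒟 ⥤ 𝒞 and a right adjoint R : 𝒟 ⥤ 𝒞 (L, F, R additive). Then the following statements are equivalent: (i) (F,R) is a quasi-Frobenius pair, i.e. R is a left quasi-adjoint for F (∃ n, ηᵢ : 𝟭_𝒟 ⟶ R ⋙ F, ζᵢ : F ⋙ R ⟶ 𝟭_𝒞 with ∑ᵢ ζᵢ_{R(D)} ∘ R(ηᵢ_D) = 𝟙_{R(D)} for all D) and F is a right quasi-adjoint for R (∃ m, η'ⱼ : 𝟭_𝒟 ⟶ R ⋙ F, ζ'ⱼ : F ⋙ R ⟶ 𝟭_𝒞 with ∑ⱼ F(ζ'ⱼ_C) ∘ η'ⱼ_{F(C)} = 𝟙_{F(C)} for all C); (ii) (L,F,R) is a quasi-Frobenius triple, i.e. L and R are similar functors: there exist n, m ∈ ℕ and natural transformations φᵢ : L ⟶ R, ψᵢ : R ⟶ L (1 ≤ i ≤ n) with ∑ᵢ ψᵢ ∘ φᵢ = 𝟙_L, and φ'ⱼ : R ⟶ L, ψ'ⱼ : L ⟶ R (1 ≤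 j ≤ m) with ∑ⱼ ψ'ⱼ ∘ φ'ⱼ = 𝟙_R; (iii) (L,F) is a quasi-Frobenius pair, i.e. F is a left quasi-adjoint for L (∃ n, ηᵢ : 𝟭_𝒞 ⟶ F ⋙ L, ζᵢ : L ⋙ F ⟶ 𝟭_𝒟 with ∑ᵢ ζᵢ_{F(C)} ∘ F(ηᵢ_C) = 𝟙_{F(C)} for all C) and L is a right quasi-adjoint for F (∃ m, η'ⱼ : 𝟭_𝒞 ⟶ F ⋙ L, ζ'ⱼ : L ⋙ F ⟶ 𝟭_𝒟 with ∑ⱼ L(ζ'ⱼ_D) ∘ η'ⱼ_{L(D)} = 𝟙_{L(D)} for all D). -/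

import Mathlib

/-!
Transposing along an adjunction `L ⊣ F` identifies `L ⟶ G` with `𝟭 ⟶ G ⋙ F` and `G ⟶ L` with
`F ⋙ G ⟶ 𝟭`. Under this dictionary the left quasi-adjoint identity `∑ G(ηᵢ) ≫ ζᵢ G = 𝟙` becomes,
componentwise, `∑ αᵢ ≫ βᵢ = 𝟙 G`, and the right quasi-adjoint identity `∑ ηᵢ F ≫ F(ζᵢ) = 𝟙`
is the conjugate (across `L ⊣ F` on both sides) of `∑ βᵢ ≫ αᵢ = 𝟙 L`; conjugation is additive and
bijective. So `(F, G)` is a quasi-Frobenius pair iff `G` is similar to `L`. Dually, along `F ⊣ R`,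
`(G, F)` is a quasi-Frobenius pair iff `G` is similar to `R`, and all three conditions say that
`L` and `R` are similar.
-/

open CategoryTheory Category Functor Preadditive

namespace CategoryTheory

section Retract

variable {A : Type*} [Category A] [Preadditive A]

def IsRetractOfSumOfCopies (X Y : A) : Prop :=
  ∃ (n : ℕ) (φ : Fin n → (X ⟶ Y)) (ψ : Fin n → (Y ⟶ X)), ∑ i, φ i ≫ ψ i = 𝟙 X

def Similar (X Y : A) : Prop :=
  IsRetractOfSumOfCopies X Y ∧ IsRetractOfSumOfCopies Y X

end Retract

variable {𝒞 : Type*} [Category 𝒞] {𝒟 : Type*} [Category 𝒟]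

namespace Functor

def IsLeftQuasiAdjoint [Preadditive 𝒞] (G : 𝒟 ⥤ 𝒞) (F : 𝒞 ⥤ 𝒟) : Prop :=
  ∃ (n : ℕ) (η : Fin n → (𝟭 𝒟 ⟶ G ⋙ F)) (ζ : Fin n → (F ⋙ G ⟶ 𝟭 𝒞)),
    ∀ D : 𝒟, ∑ i, G.map ((η i).app D) ≫ (ζ i).app (G.obj D) = 𝟙 (G.obj D)

def IsRightQuasiAdjoint [Preadditive 𝒟] (F : 𝒞 ⥤ 𝒟) (G : 𝒟 ⥤ 𝒞) : Prop :=
  ∃ (n : ℕ) (η : Fin n → (𝟭 𝒟 ⟶ G ⋙ F)) (ζ : Fin n → (F ⋙ G ⟶ 𝟭 𝒞)),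
    ∀ C : 𝒞, ∑ i, (η i).app (F.obj C) ≫ F.map ((ζ i).app C) = 𝟙 (F.obj C)

def IsQuasiFrobeniusPair [Preadditive 𝒞] [Preadditive 𝒟] (F : 𝒞 ⥤ 𝒟) (G : 𝒟 ⥤ 𝒞) : Prop :=
  G.IsLeftQuasiAdjoint F ∧ F.IsRightQuasiAdjoint G

end Functor

section Conjugate

variable [Preadditive 𝒞] [Preadditive 𝒟] {L₁ L₂ : 𝒞 ⥤ 𝒟} {R₁ R₂ : 𝒟 ⥤ 𝒞}
  (adj₁ : L₁ ⊣ R₁) (adj₂ : L₂ ⊣ R₂) {ι : Type*} (s : Finset ι)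

theorem conjugateEquiv_sum [R₂.Additive] (α : ι → (L₂ ⟶ L₁)) :
    conjugateEquiv adj₁ adj₂ (∑ i ∈ s, α i) = ∑ i ∈ s, conjugateEquiv adj₁ adj₂ (α i) := by
  ext X
  simp [NatTrans.app_sum, comp_sum, sum_comp]

theorem conjugateEquiv_symm_sum [L₂.Additive] (α : ι → (R₁ ⟶ R₂)) :
    (conjugateEquiv adj₁ adj₂).symm (∑ i ∈ s, α i) =
      ∑ i ∈ s, (conjugateEquiv adj₁ adj₂).symm (α i) := by
  ext X
  simp [NatTrans.app_sum, comp_sum, sum_comp]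

end Conjugate

namespace Adjunction

section LeftAdjoint

variable {L : 𝒟 ⥤ 𝒞} {F : 𝒞 ⥤ 𝒟}

@[simps]
def natTransFromLeftEquiv (adj : L ⊣ F) (G : 𝒟 ⥤ 𝒞) : (L ⟶ G) ≃ (𝟭 𝒟 ⟶ G ⋙ F) where
  toFun β := adj.unit ≫ whiskerRight β F
  invFun η := whiskerRight η L ≫ whiskerLeft G adj.counit
  left_inv β := by ext; simp
  right_inv η := by ext; simp

@[simps]
def natTransToLeftEquiv (adj : L ⊣ F) (G : 𝒟 ⥤ 𝒞) : (G ⟶ L) ≃ (F ⋙ G ⟶ 𝟭 𝒞) where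
  toFun α := whiskerLeft F α ≫ adj.counit
  invFun ζ := whiskerRight adj.unit G ≫ whiskerLeft L ζ
  left_inv α := by ext; simp
  right_inv ζ := by
    ext C
    have := ζ.naturality (adj.counit.app C)
    dsimp at this ⊢
    rw [assoc, ← this, ← G.map_comp_assoc]
    simp

variable {G : 𝒟 ⥤ 𝒞}

theorem map_natTransFromLeftEquiv_app_comp (adj : L ⊣ F) (α : G ⟶ L) (β : L ⟶ G) (D : 𝒟) :
    G.map ((adj.natTransFromLeftEquiv G β).app D) ≫
      (adj.natTransToLeftEquiv G α).app (G.obj D) = (α ≫ β).app D := by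
  simp

theorem natTransFromLeftEquiv_app_comp_map (adj : L ⊣ F) (α : G ⟶ L) (β : L ⟶ G) (C : 𝒞) :
    (adj.natTransFromLeftEquiv G β).app (F.obj C) ≫
      F.map ((adj.natTransToLeftEquiv G α).app C) =
      (conjugateEquiv adj adj (β ≫ α)).app C := by
  simp

theorem isLeftQuasiAdjoint_iff_isRetractOfSumOfCopies_leftAdjoint (adj : L ⊣ F) [Preadditive 𝒞] :
    G.IsLeftQuasiAdjoint F ↔ IsRetractOfSumOfCopies G L := by
  have sum_eq : ∀ {n : ℕ} (α : Fin n → (G ⟶ L)) (β : Fin n → (L ⟶ G)) (D : 𝒟),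
      ∑ i, G.map ((adj.natTransFromLeftEquiv G (β i)).app D) ≫
        (adj.natTransToLeftEquiv G (α i)).app (G.obj D) = (∑ i, α i ≫ β i).app D := by
    simp only [NatTrans.app_sum, map_natTransFromLeftEquiv_app_comp, implies_true]
  constructor
  · rintro ⟨n, η, ζ, h⟩
    refine ⟨n, fun i => (adj.natTransToLeftEquiv G).symm (ζ i),
      fun i => (adj.natTransFromLeftEquiv G).symm (η i), ?_⟩
    ext D
    rw [← sum_eq, NatTrans.id_app]
    simpa only [Equiv.apply_symm_apply] using h D
  · rintro ⟨n, α, β, h⟩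
    exact ⟨n, fun i => adj.natTransFromLeftEquiv G (β i),
      fun i => adj.natTransToLeftEquiv G (α i), fun D => by rw [sum_eq, h]; rfl⟩

theorem isRightQuasiAdjoint_iff_isRetractOfSumOfCopies_leftAdjoint (adj : L ⊣ F) [Preadditive 𝒞]
    [Preadditive 𝒟] [F.Additive] :
    F.IsRightQuasiAdjoint G ↔ IsRetractOfSumOfCopies L G := by
  have sum_eq : ∀ {n : ℕ} (α : Fin n → (G ⟶ L)) (β : Fin n → (L ⟶ G)) (C : 𝒞),
      ∑ i, (adj.natTransFromLeftEquiv G (β i)).app (F.obj C) ≫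
        F.map ((adj.natTransToLeftEquiv G (α i)).app C) =
        (conjugateEquiv adj adj (∑ i, β i ≫ α i)).app C := by
    simp only [conjugateEquiv_sum, NatTrans.app_sum, natTransFromLeftEquiv_app_comp_map,
      implies_true]
  constructor
  · rintro ⟨n, η, ζ, h⟩
    refine ⟨n, fun i => (adj.natTransFromLeftEquiv G).symm (η i),
      fun i => (adj.natTransToLeftEquiv G).symm (ζ i), ?_⟩
    apply (conjugateEquiv adj adj).injective
    ext C
    rw [← sum_eq, conjugateEquiv_id, NatTrans.id_app]
    simpa only [Equiv.apply_symm_apply] using h C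
  · rintro ⟨n, β, α, h⟩
    exact ⟨n, fun i => adj.natTransFromLeftEquiv G (β i),
      fun i => adj.natTransToLeftEquiv G (α i), fun C => by rw [sum_eq, h, conjugateEquiv_id]; rfl⟩

theorem isQuasiFrobeniusPair_iff_similar_leftAdjoint (adj : L ⊣ F) [Preadditive 𝒞] [Preadditive 𝒟]
    [F.Additive] : F.IsQuasiFrobeniusPair G ↔ Similar L G := by
  rw [IsQuasiFrobeniusPair, Similar, adj.isLeftQuasiAdjoint_iff_isRetractOfSumOfCopies_leftAdjoint,
    adj.isRightQuasiAdjoint_iff_isRetractOfSumOfCopies_leftAdjoint, and_comm]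

end LeftAdjoint

section RightAdjoint

variable {F : 𝒞 ⥤ 𝒟} {R : 𝒟 ⥤ 𝒞}

@[simps]
def natTransFromRightEquiv (adj : F ⊣ R) (G : 𝒟 ⥤ 𝒞) : (R ⟶ G) ≃ (𝟭 𝒞 ⟶ F ⋙ G) where
  toFun ψ := adj.unit ≫ whiskerLeft F ψ
  invFun η := whiskerLeft R η ≫ whiskerRight adj.counit G
  left_inv ψ := by
    ext D
    dsimp
    rw [assoc, ← ψ.naturality, ← assoc]
    simp
  right_inv η := by
    ext C
    have := η.naturality (adj.unit.app C)
    dsimp at this ⊢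
    rw [reassoc_of% this, ← G.map_comp]
    simp

@[simps]
def natTransToRightEquiv (adj : F ⊣ R) (G : 𝒟 ⥤ 𝒞) : (G ⟶ R) ≃ (G ⋙ F ⟶ 𝟭 𝒟) where
  toFun φ := whiskerRight φ F ≫ adj.counit
  invFun ζ := whiskerLeft G adj.unit ≫ whiskerRight ζ R
  left_inv φ := by ext; simp
  right_inv ζ := by ext; simp

variable {G : 𝒟 ⥤ 𝒞}

theorem natTransFromRightEquiv_app_comp_map (adj : F ⊣ R) (φ : G ⟶ R) (ψ : R ⟶ G) (D : 𝒟) :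
    (adj.natTransFromRightEquiv G ψ).app (G.obj D) ≫
      G.map ((adj.natTransToRightEquiv G φ).app D) = (φ ≫ ψ).app D := by
  simp only [natTransFromRightEquiv_apply, natTransToRightEquiv_apply, NatTrans.comp_app]
  dsimp
  rw [assoc, ← ψ.naturality, ← assoc]
  simp

theorem map_natTransFromRightEquiv_app_comp (adj : F ⊣ R) (φ : G ⟶ R) (ψ : R ⟶ G) (C : 𝒞) :
    F.map ((adj.natTransFromRightEquiv G ψ).app C) ≫
      (adj.natTransToRightEquiv G φ).app (F.obj C) =
      ((conjugateEquiv adj adj).symm (ψ ≫ φ)).app C := by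
  simp

theorem isLeftQuasiAdjoint_iff_isRetractOfSumOfCopies_rightAdjoint (adj : F ⊣ R) [Preadditive 𝒞]
    [Preadditive 𝒟] [F.Additive] :
    F.IsLeftQuasiAdjoint G ↔ IsRetractOfSumOfCopies R G := by
  have sum_eq : ∀ {n : ℕ} (φ : Fin n → (G ⟶ R)) (ψ : Fin n → (R ⟶ G)) (C : 𝒞),
      ∑ i, F.map ((adj.natTransFromRightEquiv G (ψ i)).app C) ≫
        (adj.natTransToRightEquiv G (φ i)).app (F.obj C) =
        ((conjugateEquiv adj adj).symm (∑ i, ψ i ≫ φ i)).app C := by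
    simp only [conjugateEquiv_symm_sum, NatTrans.app_sum, map_natTransFromRightEquiv_app_comp,
      implies_true]
  constructor
  · rintro ⟨n, η, ζ, h⟩
    refine ⟨n, fun i => (adj.natTransFromRightEquiv G).symm (η i),
      fun i => (adj.natTransToRightEquiv G).symm (ζ i), ?_⟩
    apply (conjugateEquiv adj adj).symm.injective
    ext C
    rw [← sum_eq, conjugateEquiv_symm_id, NatTrans.id_app]
    simpa only [Equiv.apply_symm_apply] using h C
  · rintro ⟨n, ψ, φ, h⟩
    exact ⟨n, fun i => adj.natTransFromRightEquiv G (ψ i),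
      fun i => adj.natTransToRightEquiv G (φ i),
      fun C => by rw [sum_eq, h, conjugateEquiv_symm_id]; rfl⟩

theorem isRightQuasiAdjoint_iff_isRetractOfSumOfCopies_rightAdjoint (adj : F ⊣ R) [Preadditive 𝒞] :
    G.IsRightQuasiAdjoint F ↔ IsRetractOfSumOfCopies G R := by
  have sum_eq : ∀ {n : ℕ} (φ : Fin n → (G ⟶ R)) (ψ : Fin n → (R ⟶ G)) (D : 𝒟),
      ∑ i, (adj.natTransFromRightEquiv G (ψ i)).app (G.obj D) ≫
        G.map ((adj.natTransToRightEquiv G (φ i)).app D) = (∑ i, φ i ≫ ψ i).app D := by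
    simp only [NatTrans.app_sum, natTransFromRightEquiv_app_comp_map, implies_true]
  constructor
  · rintro ⟨n, η, ζ, h⟩
    refine ⟨n, fun i => (adj.natTransToRightEquiv G).symm (ζ i),
      fun i => (adj.natTransFromRightEquiv G).symm (η i), ?_⟩
    ext D
    rw [← sum_eq, NatTrans.id_app]
    simpa only [Equiv.apply_symm_apply] using h D
  · rintro ⟨n, φ, ψ, h⟩
    exact ⟨n, fun i => adj.natTransFromRightEquiv G (ψ i),
      fun i => adj.natTransToRightEquiv G (φ i), fun D => by rw [sum_eq, h]; rfl⟩

theorem isQuasiFrobeniusPair_iff_similar_rightAdjoint (adj : F ⊣ R) [Preadditive 𝒞] [Preadditive 𝒟]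
    [F.Additive] : G.IsQuasiFrobeniusPair F ↔ Similar G R := by
  rw [IsQuasiFrobeniusPair, Similar,
    adj.isLeftQuasiAdjoint_iff_isRetractOfSumOfCopies_rightAdjoint,
    adj.isRightQuasiAdjoint_iff_isRetractOfSumOfCopies_rightAdjoint, and_comm]

end RightAdjoint

end Adjunction

end CategoryTheory

theorem quasi_frobenius_pair_tfae_general
    {𝒞 : Type*} [Category 𝒞] [Preadditive 𝒞] {𝒟 : Type*} [Category 𝒟] [Preadditive 𝒟]
    (F : 𝒞 ⥤ 𝒟) (L R : 𝒟 ⥤ 𝒞) [F.Additive]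
    (adjLF : L ⊣ F) (adjFR : F ⊣ R) :
    List.TFAE
      [ -- (i) (F,R) is a quasi-Frobenius pair:
        -- R is a left quasi-adjoint for F and F is a right quasi-adjoint for R
        ((∃ (n : ℕ) (η : Fin n → (𝟭 𝒟 ⟶ R ⋙ F)) (ζ : Fin n → (F ⋙ R ⟶ 𝟭 𝒞)),
            ∀ D : 𝒟, ∑ i, R.map ((η i).app D) ≫ (ζ i).app (R.obj D) = 𝟙 (R.obj D)) ∧
          (∃ (m : ℕ) (η' : Fin m → (𝟭 𝒟 ⟶ R ⋙ F)) (ζ' : Fin m → (F ⋙ R ⟶ 𝟭 𝒞)),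
            ∀ C : 𝒞, ∑ j, (η' j).app (F.obj C) ≫ F.map ((ζ' j).app C) = 𝟙 (F.obj C))),
        -- (ii) (L,F,R) is a quasi-Frobenius triple: L and R are similar
        ((∃ (n : ℕ) (φ : Fin n → (L ⟶ R)) (ψ : Fin n → (R ⟶ L)),
            ∑ i, φ i ≫ ψ i = 𝟙 L) ∧
          (∃ (m : ℕ) (φ' : Fin m → (R ⟶ L)) (ψ' : Fin m → (L ⟶ R)),
            ∑ j, φ' j ≫ ψ' j = 𝟙 R)),
        -- (iii) (L,F) is a quasi-Frobenius pair:
        -- F is a left quasi-adjoint for L and L is a right quasi-adjoint for F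
        ((∃ (n : ℕ) (η : Fin n → (𝟭 𝒞 ⟶ F ⋙ L)) (ζ : Fin n → (L ⋙ F ⟶ 𝟭 𝒟)),
            ∀ C : 𝒞, ∑ i, F.map ((η i).app C) ≫ (ζ i).app (F.obj C) = 𝟙 (F.obj C)) ∧
          (∃ (m : ℕ) (η' : Fin m → (𝟭 𝒞 ⟶ F ⋙ L)) (ζ' : Fin m → (L ⋙ F ⟶ 𝟭 𝒟)),
            ∀ D : 𝒟, ∑ j, (η' j).app (L.obj D) ≫ L.map ((ζ' j).app D) = 𝟙 (L.obj D))) ] := by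
  change List.TFAE [F.IsQuasiFrobeniusPair R, Similar L R, L.IsQuasiFrobeniusPair F]
  rw [adjLF.isQuasiFrobeniusPair_iff_similar_leftAdjoint,
    adjFR.isQuasiFrobeniusPair_iff_similar_rightAdjoint]
  exact List.tfae_of_forall (Similar L R) _ (by simp)

/-- For an additive functor `F : 𝒞 ⥤ 𝒟` between preadditive categories, with additive
left adjoint `L` and additive right adjoint `R`, the following are equivalent:
(i) `(F,R)` is a quasi-Frobenius pair;
(ii) `(L,F,R)` is a quasi-Frobenius triple, i.e. `L` and `R` are similar functors;
(iii) `(L,F)` is a quasi-Frobenius pair. -/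
theorem quasi_frobenius_pair_tfae
    {𝒞 : Type*} [Category 𝒞] [Preadditive 𝒞] {𝒟 : Type*} [Category 𝒟] [Preadditive 𝒟]
    (F : 𝒞 ⥤ 𝒟) (L R : 𝒟 ⥤ 𝒞) [F.Additive] [L.Additive] [R.Additive]
    (adjLF : L ⊣ F) (adjFR : F ⊣ R) :
    List.TFAE
      [ -- (i) (F,R) is a quasi-Frobenius pair:
        -- R is a left quasi-adjoint for F and F is a right quasi-adjoint for R
        ((∃ (n : ℕ) (η : Fin n → (𝟭 𝒟 ⟶ R ⋙ F)) (ζ : Fin n → (F ⋙ R ⟶ 𝟭 𝒞)),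
            ∀ D : 𝒟, ∑ i, R.map ((η i).app D) ≫ (ζ i).app (R.obj D) = 𝟙 (R.obj D)) ∧
          (∃ (m : ℕ) (η' : Fin m → (𝟭 𝒟 ⟶ R ⋙ F)) (ζ' : Fin m → (F ⋙ R ⟶ 𝟭 𝒞)),
            ∀ C : 𝒞, ∑ j, (η' j).app (F.obj C) ≫ F.map ((ζ' j).app C) = 𝟙 (F.obj C))),
        -- (ii) (L,F,R) is a quasi-Frobenius triple: L and R are similar
        ((∃ (n : ℕ) (φ : Fin n → (L ⟶ R)) (ψ : Fin n → (R ⟶ L)),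
            ∑ i, φ i ≫ ψ i = 𝟙 L) ∧
          (∃ (m : ℕ) (φ' : Fin m → (R ⟶ L)) (ψ' : Fin m → (L ⟶ R)),
            ∑ j, φ' j ≫ ψ' j = 𝟙 R)),
        -- (iii) (L,F) is a quasi-Frobenius pair:
        -- F is a left quasi-adjoint for L and L is a right quasi-adjoint for F
        ((∃ (n : ℕ) (η : Fin n → (𝟭 𝒞 ⟶ F ⋙ L)) (ζ : Fin n → (L ⋙ F ⟶ 𝟭 𝒟)),
            ∀ C : 𝒞, ∑ i, F.map ((η i).app C) ≫ (ζ i).app (F.obj C) = 𝟙 (F.obj C)) ∧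
          (∃ (m : ℕ) (η' : Fin m → (𝟭 𝒞 ⟶ F ⋙ L)) (ζ' : Fin m → (L ⋙ F ⟶ 𝟭 𝒟)),
            ∀ D : 𝒟, ∑ j, (η' j).app (L.obj D) ≫ L.map ((ζ' j).app D) = 𝟙 (L.obj D))) ] :=
  quasi_frobenius_pair_tfae_general F L R adjLF adjFR
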